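/- arXiv:2604.24008 — 4 statements merged into one kernel-verified Lean document; each statement's English description precedes it below -/
import Mathlib

section
/- For a monotone submodular set function F on subsets of a finite set P, if T ⊆ P has |T| ≤ K with K ≥ 1, and g is a real number such that F(S ∪ {s}) − F(S) ≤ g for every s ∈ P \ S and 0 ≤ g, then F(T) − F(S) ≤ K·g; in particular the optimality gap at S is at most K times the maximum singleton marginal gain at S. -/
/-- `F` is monotone on subsets of `P`. -/
def MonotoneOn' {α : Type*} (P : Finset α) (F : Finset α → ℝ) : Prop :=
  ∀ S T : Finset α, S ⊆ T → T ⊆ P → F S ≤ F T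

/-- `F` is submodular on subsets of `P`. -/
def SubmodularOn {α : Type*} [DecidableEq α] (P : Finset α) (F : Finset α → ℝ) : Prop :=
  ∀ A B : Finset α, A ⊆ B → B ⊆ P → ∀ s ∈ P, s ∉ B →
    F (insert s A) - F A ≥ F (insert s B) - F B

/-- If every singleton marginal gain at `S` is at most `g ≥ 0`, then the optimality
gap `F T - F S` for any `T ⊆ P` with `|T| ≤ K` is at most `K · g`. -/
theorem submodular_gap_bound {α : Type*} [DecidableEq α]
    (P : Finset α) (F : Finset α → ℝ)
    (hmono : MonotoneOn' P F) (hsub : SubmodularOn P F)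
    (K : ℕ) (hK : 1 ≤ K)
    (S T : Finset α) (hSP : S ⊆ P) (hTP : T ⊆ P) (hTcard : T.card ≤ K)
    (g : ℝ) (hg0 : 0 ≤ g)
    (hg : ∀ s ∈ P, s ∉ S → F (insert s S) - F S ≤ g) :
    F T - F S ≤ (K : ℝ) * g := by
  have key : ∀ U : Finset α, U ⊆ P → F (S ∪ U) - F S ≤ (U.card : ℝ) * g := by
    intro U
    induction U using Finset.induction_on with
    | empty => intro _; simp
    | @insert a U ha ih =>
      intro hUP
      have haP : a ∈ P := hUP (Finset.mem_insert_self a U)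
      have hUP' : U ⊆ P := fun x hx => hUP (Finset.mem_insert_of_mem hx)
      have step : F (S ∪ insert a U) - F (S ∪ U) ≤ g := by
        by_cases haSU : a ∈ S ∪ U
        · have : S ∪ insert a U = S ∪ U := by
            ext x; simp only [Finset.mem_union, Finset.mem_insert]
            constructor
            · rintro (h | rfl | h)
              · exact Or.inl h
              · simpa using haSU
              · exact Or.inr h
            · rintro (h | h)
              · exact Or.inl h
              · exact Or.inr (Or.inr h)
          rw [this]; simpa using hg0
        · have haS : a ∉ S := fun h => haSU (Finset.mem_union_left _ h)
          have hSubU : S ⊆ S ∪ U := Finset.subset_union_left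
          have hSUP : S ∪ U ⊆ P := Finset.union_subset hSP hUP'
          have := hsub S (S ∪ U) hSubU hSUP a haP haSU
          have h2 := hg a haP haS
          have : F (insert a (S ∪ U)) - F (S ∪ U) ≤ g := le_trans this h2
          simpa [Finset.union_insert] using this
      have := ih hUP'
      have hcard : ((insert a U).card : ℝ) = (U.card : ℝ) + 1 := by
        rw [Finset.card_insert_of_notMem ha]; push_cast; ring
      rw [hcard]
      linarith
  have h1 : F T ≤ F (S ∪ T) := hmono T (S ∪ T) Finset.subset_union_right
    (Finset.union_subset hSP hTP)
  have h2 := key T hTP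
  have h3 : (T.card : ℝ) * g ≤ (K : ℝ) * g := by
    apply mul_le_mul_of_nonneg_right _ hg0
    exact_mod_cast hTcard
  linarith
end

section
/- Greedy per-step gain bound: let F be a monotone submodular set function on subsets of a finite set P, let T ⊆ P with |T| ≤ K and K ≥ 1, let S ⊆ P be such that T \ S is nonempty, and let s* ∈ P \ S maximize the marginal gain F(S ∪ {s}) − F(S) over all s ∈ P \ S. Then F(S ∪ {s*}) − F(S) ≥ (F(T) − F(S)) / K. -/
lemma telescope_bound {α : Type*} [DecidableEq α]
    (P : Finset α) (F : Finset α → ℝ) (hsub : SubmodularOn P F)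
    (S : Finset α) (hSP : S ⊆ P) :
    ∀ D : Finset α, D ⊆ P →
      F (S ∪ D) - F S ≤ ∑ t ∈ D, (F (insert t S) - F S) := by
  intro D
  induction D using Finset.induction_on with
  | empty => simp
  | @insert a D ha ih =>
    intro hDP
    have hDP' : D ⊆ P := (Finset.subset_insert a D).trans hDP
    have haP : a ∈ P := hDP (Finset.mem_insert_self a D)
    rw [Finset.sum_insert ha]
    have key : F (S ∪ insert a D) - F (S ∪ D) ≤ F (insert a S) - F S := by
      by_cases haS : a ∈ S
      · have h1 : S ∪ insert a D = S ∪ D := by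
          ext x; simp only [Finset.mem_union, Finset.mem_insert]
          constructor
          · rintro (h | rfl | h) <;> simp_all
          · rintro (h | h) <;> simp_all
        have h2 : insert a S = S := Finset.insert_eq_self.mpr haS
        rw [h1, h2]; ring_nf; exact le_refl _
      · have haSD : a ∉ S ∪ D := by simp [haS, ha]
        have h1 : S ∪ insert a D = insert a (S ∪ D) := by
          ext x; simp [Finset.mem_union, Finset.mem_insert]
        rw [h1]
        exact hsub S (S ∪ D) Finset.subset_union_left
          (Finset.union_subset hSP hDP') a haP haSD
    have := ih hDP'
    linarith

/-- Greedy per-step gain bound: the best singleton marginal gain at `S` is at least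
`(F T - F S) / K` for any `T ⊆ P` with `|T| ≤ K` and `T \ S` nonempty. -/
theorem greedy_step_gain {α : Type*} [DecidableEq α]
    (P : Finset α) (F : Finset α → ℝ)
    (hmono : MonotoneOn' P F) (hsub : SubmodularOn P F)
    (K : ℕ) (hK : 1 ≤ K)
    (T : Finset α) (hTP : T ⊆ P) (hTcard : T.card ≤ K)
    (S : Finset α) (hSP : S ⊆ P) (hTS : (T \ S).Nonempty)
    (sstar : α) (hstar : sstar ∈ P) (hstarS : sstar ∉ S)
    (hmax : ∀ s ∈ P, s ∉ S → F (insert s S) - F S ≤ F (insert sstar S) - F S) :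
    F (insert sstar S) - F S ≥ (F T - F S) / (K : ℝ) := by
  set g := F (insert sstar S) - F S with hg
  -- g ≥ 0
  obtain ⟨t0, ht0⟩ := hTS
  have ht0T : t0 ∈ T := (Finset.mem_sdiff.mp ht0).1
  have ht0S : t0 ∉ S := (Finset.mem_sdiff.mp ht0).2
  have ht0P : t0 ∈ P := hTP ht0T
  have hg0 : 0 ≤ g := by
    have h1 : F S ≤ F (insert t0 S) :=
      hmono S (insert t0 S) (Finset.subset_insert _ _) (Finset.insert_subset ht0P hSP)
    have := hmax t0 ht0P ht0S
    linarith
  -- telescoping over T \ S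
  have hD : (T \ S : Finset α) ⊆ P := (Finset.sdiff_subset).trans hTP
  have htel := telescope_bound P F hsub S hSP (T \ S) hD
  have hsum : ∑ t ∈ (T \ S), (F (insert t S) - F S) ≤ (T \ S).card * g := by
    rw [Finset.card_eq_sum_ones, Nat.cast_sum, Finset.sum_mul]
    apply Finset.sum_le_sum
    intro t ht
    have htS : t ∉ S := (Finset.mem_sdiff.mp ht).2
    have htP : t ∈ P := hD ht
    simpa using hmax t htP htS
  have hcard : ((T \ S).card : ℝ) ≤ (K : ℝ) := by
    exact_mod_cast le_trans (Finset.card_le_card Finset.sdiff_subset) hTcard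
  have hFT : F T ≤ F (S ∪ (T \ S)) := by
    apply hmono T _ _ (Finset.union_subset hSP hD)
    intro x hx
    by_cases hxS : x ∈ S <;> simp [Finset.mem_union, Finset.mem_sdiff, hx, hxS]
  have hKpos : (0 : ℝ) < K := by exact_mod_cast hK
  rw [ge_iff_le, div_le_iff₀ hKpos]
  have : ((T \ S).card : ℝ) * g ≤ K * g :=
    mul_le_mul_of_nonneg_right hcard hg0
  linarith
end

section
/- Nemhauser–Wolsey–Fisher greedy guarantee (general form used in Theorem 1): let F be a monotone submodular set function on subsets of a finite set P with F(∅) = 0, let K ≥ 1, and define the greedy sequence S_0 = ∅ and S_{k+1} = S_k ∪ {s_k}, where s_k ∈ P \ S_k maximizes the marginal gain F(S_k ∪ {s}) − F(S_k) over s ∈ P \ S_k (assuming |P| ≥ K so each step is well defined). Then for every T ⊆ P with |T| ≤ K, F(S_K) ≥ (1 − (1 − 1/K)^K)·F(T), and in particular F(S_K) ≥ (1 − 1/e)·F(T). -/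
lemma submod_sum {α : Type*} [DecidableEq α] (P : Finset α) (F : Finset α → ℝ)
    (hmono : MonotoneOn' P F) (hsub : SubmodularOn P F) :
    ∀ B : Finset α, B ⊆ P → ∀ A : Finset α, A ⊆ P →
      F (A ∪ B) - F A ≤ ∑ t ∈ B, (F (insert t A) - F A) := by
  intro B
  induction B using Finset.induction_on with
  | empty => intro _ A _; simp
  | insert _ _ hb =>
    rename_i b B' ih
    intro hBP A hAP
    have hbP : b ∈ P := hBP (Finset.mem_insert_self b B')
    have hB'P : B' ⊆ P := fun x hx => hBP (Finset.mem_insert_of_mem hx)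
    rw [Finset.sum_insert hb]
    have h1 : F (A ∪ B') - F A ≤ ∑ t ∈ B', (F (insert t A) - F A) := ih hB'P A hAP
    have hAB'P : A ∪ B' ⊆ P := Finset.union_subset hAP hB'P
    have h2 : F (A ∪ insert b B') - F (A ∪ B') ≤ F (insert b A) - F A := by
      rw [Finset.union_insert]
      by_cases hbAB : b ∈ A ∪ B'
      · rw [Finset.insert_eq_self.mpr hbAB]
        have : F A ≤ F (insert b A) :=
          hmono A (insert b A) (Finset.subset_insert _ _) (Finset.insert_subset hbP hAP)
        linarith
      · exact hsub A (A ∪ B') Finset.subset_union_left hAB'P b hbP hbAB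
    linarith

/-- Nemhauser–Wolsey–Fisher greedy guarantee: the `K`-step greedy sequence
`S 0 = ∅`, `S (k+1) = insert (sel k) (S k)` with `sel k` a marginal-gain
maximizer over `P \ S k`, satisfies
`F (S K) ≥ (1 - (1 - 1/K)^K) · F T ≥ (1 - 1/e) · F T` for every `T ⊆ P`
with `|T| ≤ K`. -/
theorem greedy_guarantee {α : Type*} [DecidableEq α]
    (P : Finset α) (F : Finset α → ℝ)
    (hmono : MonotoneOn' P F) (hsub : SubmodularOn P F)
    (hF0 : F ∅ = 0)
    (K : ℕ) (hK : 1 ≤ K) (hPcard : K ≤ P.card)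
    (S : ℕ → Finset α) (sel : ℕ → α)
    (hS0 : S 0 = ∅)
    (hstep : ∀ k < K, S (k + 1) = insert (sel k) (S k))
    (hselP : ∀ k < K, sel k ∈ P) (hselS : ∀ k < K, sel k ∉ S k)
    (hmax : ∀ k < K, ∀ t ∈ P, t ∉ S k →
      F (insert t (S k)) - F (S k) ≤ F (insert (sel k) (S k)) - F (S k))
    (T : Finset α) (hTP : T ⊆ P) (hTcard : T.card ≤ K) :
    (1 - (1 - 1 / (K : ℝ)) ^ K) * F T ≤ F (S K) ∧
      (1 - 1 / Real.exp 1) * F T ≤ F (S K) := by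
  have hKpos : (0:ℝ) < (K:ℝ) := by exact_mod_cast Nat.lt_of_lt_of_le Nat.zero_lt_one hK
  have hKne : (K:ℝ) ≠ 0 := ne_of_gt hKpos
  have hq0 : (0:ℝ) ≤ 1 - 1/(K:ℝ) := by
    have : (1:ℝ) ≤ (K:ℝ) := by exact_mod_cast hK
    rw [sub_nonneg, div_le_one hKpos]; exact this
  -- S k ⊆ P
  have hSsub : ∀ k, k ≤ K → S k ⊆ P := by
    intro k
    induction k with
    | zero => intro _; rw [hS0]; exact Finset.empty_subset P
    | succ n ih =>
      intro h
      rw [hstep n (by omega)]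
      exact Finset.insert_subset (hselP n (by omega)) (ih (by omega))
  have hFT0 : 0 ≤ F T := by
    have := hmono ∅ T (Finset.empty_subset T) hTP
    linarith
  set d : ℕ → ℝ := fun k => F T - F (S k) with hd
  have key : ∀ k, k < K → d (k+1) ≤ (1 - 1/(K:ℝ)) * d k := by
    intro k hk
    have hSk : S k ⊆ P := hSsub k (le_of_lt hk)
    have hSk1 : S (k+1) ⊆ P := hSsub (k+1) (by omega)
    have hst := hstep k hk
    set G : ℝ := F (S (k+1)) - F (S k) with hG
    have hG0 : 0 ≤ G := by
      have : F (S k) ≤ F (S (k+1)) := by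
        rw [hst]; exact hmono (S k) _ (Finset.subset_insert _ _) (hst ▸ hSk1)
      linarith
    -- F T - F (S k) ≤ K * G
    have hstep1 : F T ≤ F (S k ∪ T) :=
      hmono T (S k ∪ T) Finset.subset_union_right (Finset.union_subset hSk hTP)
    have hstep2 : F (S k ∪ T) - F (S k) ≤ ∑ t ∈ T, (F (insert t (S k)) - F (S k)) :=
      submod_sum P F hmono hsub T hTP (S k) hSk
    have hstep3 : ∑ t ∈ T, (F (insert t (S k)) - F (S k)) ≤ (T.card : ℝ) * G := by
      have : ∀ t ∈ T, F (insert t (S k)) - F (S k) ≤ G := by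
        intro t ht
        by_cases htS : t ∈ S k
        · rw [Finset.insert_eq_self.mpr htS]; simpa using hG0
        · have := hmax k hk t (hTP ht) htS
          rw [hG, hst]; linarith
      calc ∑ t ∈ T, (F (insert t (S k)) - F (S k)) ≤ ∑ _t ∈ T, G :=
            Finset.sum_le_sum this
        _ = (T.card : ℝ) * G := by rw [Finset.sum_const, nsmul_eq_mul]
    have hcard : (T.card : ℝ) ≤ (K : ℝ) := by exact_mod_cast hTcard
    have hKG : F T - F (S k) ≤ (K:ℝ) * G := by
      have : (T.card : ℝ) * G ≤ (K:ℝ) * G := mul_le_mul_of_nonneg_right hcard hG0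
      linarith
    -- rearrange
    have hdk : F T - F (S (k+1)) ≤ (1 - 1/(K:ℝ)) * (F T - F (S k)) := by
      have hGeq : F (S (k+1)) = F (S k) + G := by rw [hG]; ring
      rw [hGeq]
      have h1 : (1:ℝ) - 1/(K:ℝ) = ((K:ℝ)-1)/(K:ℝ) := by field_simp
      rw [h1, div_mul_eq_mul_div, le_div_iff₀ hKpos]
      nlinarith [hKG]
    simpa [hd] using hdk
  have hiter : ∀ k, k ≤ K → d k ≤ (1 - 1/(K:ℝ))^k * F T := by
    intro k
    induction k with
    | zero => intro _; simp [hd, hS0, hF0]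
    | succ n ih =>
      intro h
      calc d (n+1) ≤ (1 - 1/(K:ℝ)) * d n := key n (by omega)
        _ ≤ (1 - 1/(K:ℝ)) * ((1 - 1/(K:ℝ))^n * F T) :=
            mul_le_mul_of_nonneg_left (ih (by omega)) hq0
        _ = (1 - 1/(K:ℝ))^(n+1) * F T := by ring
  have hmain : (1 - (1 - 1 / (K : ℝ)) ^ K) * F T ≤ F (S K) := by
    have := hiter K le_rfl
    simp only [hd] at this
    linarith
  refine ⟨hmain, ?_⟩
  have hpow : (1 - 1/(K:ℝ))^K ≤ 1 / Real.exp 1 := by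
    have h1 : 1 - 1/(K:ℝ) ≤ Real.exp (-(1/(K:ℝ))) := by
      have := Real.add_one_le_exp (-(1/(K:ℝ)))
      linarith
    calc (1 - 1/(K:ℝ))^K ≤ (Real.exp (-(1/(K:ℝ))))^K := pow_le_pow_left₀ hq0 h1 K
      _ = Real.exp ((K:ℝ) * (-(1/(K:ℝ)))) := (Real.exp_nat_mul _ K).symm
      _ = Real.exp (-1) := by rw [mul_neg, mul_one_div, div_self hKne]
      _ = 1 / Real.exp 1 := by rw [Real.exp_neg]; exact (one_div _).symm
  have : (1 - 1 / Real.exp 1) * F T ≤ (1 - (1 - 1 / (K : ℝ)) ^ K) * F T := by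
    apply mul_le_mul_of_nonneg_right _ hFT0
    linarith
  linarith
end

section
/- Sharper budget-dependent gap decay: let F be a monotone submodular set function on subsets of a finite set P with F(∅) = 0, let K ≥ 1, let T ⊆ P with |T| ≤ K, and let S_0 = ∅, S_{k+1} = S_k ∪ {s_k} be the greedy sequence in which s_k ∈ P \ S_k maximizes the marginal gain at S_k (assuming |P| ≥ K). Then for every k with 0 ≤ k ≤ K, F(T) − F(S_k) ≤ (1 − 1/K)^k · F(T). -/
lemma submod_sum_bound {α : Type*} [DecidableEq α]
    (P : Finset α) (F : Finset α → ℝ) (hsub : SubmodularOn P F) :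
    ∀ A : Finset α, A ⊆ P → ∀ S : Finset α, S ⊆ P →
      F (S ∪ A) - F S ≤ ∑ t ∈ A \ S, (F (insert t S) - F S) := by
  intro A
  induction A using Finset.induction_on with
  | empty => intro _ S _; simp
  | @insert a A ha ih =>
    intro hAP S hSP
    have hAP' : A ⊆ P := (Finset.subset_insert a A).trans hAP
    have haP : a ∈ P := hAP (Finset.mem_insert_self a A)
    by_cases haS : a ∈ S
    · have h1 : S ∪ insert a A = S ∪ A := by
        rw [Finset.union_insert, Finset.insert_eq_self.mpr (Finset.mem_union_left A haS)]
      have h2 : insert a A \ S = A \ S := Finset.insert_sdiff_of_mem A haS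
      rw [h1, h2]; exact ih hAP' S hSP
    · have h1 : S ∪ insert a A = insert a (S ∪ A) := by rw [Finset.union_insert]
      have h2 : insert a A \ S = insert a (A \ S) := Finset.insert_sdiff_of_notMem A haS
      have haAS : a ∉ A \ S := fun h => ha (Finset.mem_sdiff.mp h).1
      rw [h1, h2, Finset.sum_insert haAS]
      have haSA : a ∉ S ∪ A := by
        simp only [Finset.mem_union]; tauto
      have hSA_P : S ∪ A ⊆ P := Finset.union_subset hSP hAP'
      have hsubm := hsub S (S ∪ A) Finset.subset_union_left hSA_P a haP haSA
      have := ih hAP' S hSP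
      linarith

/-- Sharper budget-dependent gap decay: along the greedy sequence, the optimality
gap after `k` steps is at most `(1 - 1/K)^k · F T`. -/
theorem greedy_gap_decay {α : Type*} [DecidableEq α]
    (P : Finset α) (F : Finset α → ℝ)
    (hmono : MonotoneOn' P F) (hsub : SubmodularOn P F)
    (hF0 : F ∅ = 0)
    (K : ℕ) (hK : 1 ≤ K) (hPcard : K ≤ P.card)
    (T : Finset α) (hTP : T ⊆ P) (hTcard : T.card ≤ K)
    (S : ℕ → Finset α) (sel : ℕ → α)
    (hS0 : S 0 = ∅)
    (hstep : ∀ k < K, S (k + 1) = insert (sel k) (S k))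
    (hselP : ∀ k < K, sel k ∈ P) (hselS : ∀ k < K, sel k ∉ S k)
    (hmax : ∀ k < K, ∀ t ∈ P, t ∉ S k →
      F (insert t (S k)) - F (S k) ≤ F (insert (sel k) (S k)) - F (S k)) :
    ∀ k ≤ K, F T - F (S k) ≤ (1 - 1 / (K : ℝ)) ^ k * F T := by
  have hKR : (1 : ℝ) ≤ (K : ℝ) := by exact_mod_cast hK
  have hKpos : (0 : ℝ) < K := by linarith
  have hc0 : (0 : ℝ) ≤ 1 - 1 / K := by
    rw [sub_nonneg, div_le_one hKpos]; exact hKR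
  -- S k ⊆ P for k ≤ K
  have hSP : ∀ k ≤ K, S k ⊆ P := by
    intro k
    induction k with
    | zero => intro _; rw [hS0]; exact Finset.empty_subset P
    | succ n ih =>
      intro hn
      have hnK : n < K := hn
      rw [hstep n hnK]
      exact Finset.insert_subset (hselP n hnK) (ih (le_of_lt hnK))
  have hFT0 : 0 ≤ F T := by
    rw [← hF0]; exact hmono ∅ T (Finset.empty_subset T) hTP
  -- key step inequality
  have hkey : ∀ k < K, F T - F (S (k + 1)) ≤ (1 - 1 / K) * (F T - F (S k)) := by
    intro k hkK
    have hSkP := hSP k (le_of_lt hkK)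
    set δ := F (insert (sel k) (S k)) - F (S k) with hδ
    have hδ0 : 0 ≤ δ := by
      have := hmono (S k) (insert (sel k) (S k)) (Finset.subset_insert _ _)
        (Finset.insert_subset (hselP k hkK) hSkP)
      linarith
    have hsum := submod_sum_bound P F hsub T hTP (S k) hSkP
    have hsum_le : ∑ t ∈ T \ S k, (F (insert t (S k)) - F (S k)) ≤ (T \ S k).card * δ := by
      calc ∑ t ∈ T \ S k, (F (insert t (S k)) - F (S k))
          ≤ ∑ _t ∈ T \ S k, δ := by
            apply Finset.sum_le_sum
            intro t ht
            have htT := (Finset.mem_sdiff.mp ht).1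
            have htS := (Finset.mem_sdiff.mp ht).2
            exact hmax k hkK t (hTP htT) htS
        _ = (T \ S k).card * δ := by rw [Finset.sum_const, nsmul_eq_mul]
    have hcard : ((T \ S k).card : ℝ) ≤ K := by
      have : (T \ S k).card ≤ T.card := Finset.card_le_card (Finset.sdiff_subset)
      exact_mod_cast le_trans this hTcard
    have hcardδ : ((T \ S k).card : ℝ) * δ ≤ K * δ :=
      mul_le_mul_of_nonneg_right hcard hδ0
    have hmonoT : F T ≤ F (S k ∪ T) :=
      hmono T (S k ∪ T) Finset.subset_union_right (Finset.union_subset hSkP hTP)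
    have hgap : F T - F (S k) ≤ K * δ := by linarith
    have hS1 : F (S (k + 1)) = F (S k) + δ := by
      rw [hstep k hkK, hδ]; ring
    rw [hS1]
    have : δ ≥ (F T - F (S k)) / K := by
      rw [ge_iff_le, div_le_iff₀ hKpos]; linarith
    have expand : (1 - 1 / K) * (F T - F (S k)) = (F T - F (S k)) - (F T - F (S k)) / K := by
      field_simp
    rw [expand]; linarith
  intro k
  induction k with
  | zero => intro _; rw [hS0, hF0]; simp
  | succ n ih =>
    intro hn
    have hnK : n < K := hn
    calc F T - F (S (n + 1)) ≤ (1 - 1 / K) * (F T - F (S n)) := hkey n hnK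
      _ ≤ (1 - 1 / K) * ((1 - 1 / K) ^ n * F T) :=
          mul_le_mul_of_nonneg_left (ih (le_of_lt hnK)) hc0
      _ = (1 - 1 / K) ^ (n + 1) * F T := by ring
end
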